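/- Let P_4 be the path with vertices {0,1,2,3,4} and edges i–(i+1), let P_12 be the path with 13 vertices a,b,c,d,e,f,g,h,i,j,k,l,m (consecutive vertices adjacent), and let ψ : P_12 → P_4 be the graph homomorphism with values, in order along P_12: 0,1,2,1,2,3,4,3,2,3,2,1,0. Then for every digraph D without isolated points, every graph homomorphism χ : P_12 → D ⋆ (P_12, a, m) satisfying ψ_D ∘ χ = ψ is equal to φ_{(u,v)} for some edge (u,v) ∈ E(D). -/

import Mathlib

/-!
A walk in `D ⋆ P₁₂` whose interior avoids `D` never leaves one copy `φ_{(u,v)}(P₁₂)`, so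
`χ = φ_{(u,v)} ∘ x` for an endomorphism `x` of `P₁₂` with `ψ ∘ x = ψ`. Such an `x` is the
identity: it fixes `6`, the only vertex of colour `4`, and maps `0` and `12` into `{0, 12}`;
being `1`-Lipschitz it is then `k ↦ k` or `k ↦ 12 - k` on each of `[0, 6]` and `[6, 12]`, and
the colours of `3` and `9` exclude both reflections.
-/

open SimpleGraph

attribute [local instance] Classical.propDecidable

/-- The vertex set of the arrow construction `D ⋆ H`: the disjoint union of `D` and
`E(D) × (V(H) ∖ {a, b})`, where `E(D)` is the set of edges of the digraph `(D, E)` and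
`a`, `b` are the two distinguished vertices of `H`. -/
def starVert (V : Type*) (a b : V) (D : Type*) (E : D → D → Prop) : Type _ :=
  D ⊕ ({p : D × D // E p.1 p.2} × {x : V // x ≠ a ∧ x ≠ b})

/-- For an edge `(u, v)` of the digraph `(D, E)`, the map
`φ_{(u,v)} : V(H) → V(D ⋆ H)` sending `a ↦ u`, `b ↦ v`, and `x ↦ (u, v, x)` otherwise. -/
noncomputable def starPhi {V : Type*} (a b : V) {D : Type*} {E : D → D → Prop}
    (u v : D) (huv : E u v) (x : V) : starVert V a b D E :=
  if hx : x = a then Sum.inl u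
  else if hx' : x = b then Sum.inl v
  else Sum.inr (⟨(u, v), huv⟩, ⟨x, hx, hx'⟩)

/-- The arrow construction `D ⋆ H` for a simple graph `H` with distinguished vertices
`a`, `b` and a digraph `(D, E)`: the edges are exactly the pairs
`(φ_{(u,v)} s, φ_{(u,v)} t)` for `(u, v) ∈ E(D)` and `(s, t) ∈ E(H)`. -/
noncomputable def starGraph {V : Type*} (H : SimpleGraph V) (a b : V)
    (D : Type*) (E : D → D → Prop) : SimpleGraph (starVert V a b D E) :=
  SimpleGraph.fromRel (fun x y => ∃ (u v : D) (huv : E u v) (s t : V),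
    H.Adj s t ∧ starPhi a b u v huv s = x ∧ starPhi a b u v huv t = y)

/-- Given a vertex map `f : V(H) → V(G)` (intended to satisfy `f a = f b`), the map
`f_D : V(D ⋆ H) → V(G)` sending every vertex of `D` to `f a` and `(u, v, y) ↦ f y`. -/
def starMap {V W : Type*} (f : V → W) (a b : V) {D : Type*} {E : D → D → Prop} :
    starVert V a b D E → W :=
  Sum.elim (fun _ => f a) (fun p => f p.2.val)

/-- Given a digraph homomorphism `h : (D₁, E₁) → (D₂, E₂)`, the map
`h ⋆ H : V(D₁ ⋆ H) → V(D₂ ⋆ H)` sending `x ↦ h x` for `x ∈ D₁` and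
`(u, v, w) ↦ (h u, h v, w)`. -/
def starMapHom {V : Type*} (a b : V) {D₁ D₂ : Type*}
    {E₁ : D₁ → D₁ → Prop} {E₂ : D₂ → D₂ → Prop}
    (h : D₁ → D₂) (hh : ∀ u v, E₁ u v → E₂ (h u) (h v)) :
    starVert V a b D₁ E₁ → starVert V a b D₂ E₂ :=
  Sum.elim (fun x => Sum.inl (h x))
    (fun p => Sum.inr (⟨(h p.1.val.1, h p.1.val.2), hh _ _ p.1.prop⟩, p.2))

section Star

variable {V : Type*} {a b : V} {D : Type*} {E : D → D → Prop}

lemma starPhi_left {u v : D} (huv : E u v) : starPhi a b u v huv a = Sum.inl u :=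
  dif_pos rfl

lemma starPhi_right (hab : a ≠ b) {u v : D} (huv : E u v) :
    starPhi a b u v huv b = Sum.inl v :=
  (dif_neg hab.symm).trans (dif_pos rfl)

lemma starPhi_of_ne {x : V} (hxa : x ≠ a) (hxb : x ≠ b) {u v : D} (huv : E u v) :
    starPhi a b u v huv x = Sum.inr (⟨(u, v), huv⟩, ⟨x, hxa, hxb⟩) :=
  (dif_neg hxa).trans (dif_neg hxb)

lemma isRight_starPhi_iff {u v : D} (huv : E u v) {x : V} :
    (starPhi a b u v huv x).isRight ↔ x ≠ a ∧ x ≠ b := by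
  by_cases hxa : x = a
  · subst hxa
    simp [starPhi_left]
  by_cases hxb : x = b
  · subst hxb
    simp [starPhi_right (Ne.symm hxa)]
  · simp [starPhi_of_ne hxa hxb, hxa, hxb]

lemma starPhi_congr {u v u' v' : D} (huv : E u v) (huv' : E u' v') (hu : u = u') (hv : v = v')
    (x : V) : starPhi a b u v huv x = starPhi a b u' v' huv' x := by
  subst hu hv
  rfl

lemma starPhi_inj_of_isRight {u v u' v' : D} {huv : E u v} {huv' : E u' v'} {x x' : V}
    (h : starPhi a b u v huv x = starPhi a b u' v' huv' x')
    (hr : (starPhi a b u v huv x).isRight) : u = u' ∧ v = v' ∧ x = x' := by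
  obtain ⟨hxa, hxb⟩ := (isRight_starPhi_iff huv).mp hr
  obtain ⟨hxa', hxb'⟩ := (isRight_starPhi_iff huv').mp (h ▸ hr)
  rw [starPhi_of_ne hxa hxb, starPhi_of_ne hxa' hxb'] at h
  obtain ⟨he, hx⟩ := Prod.mk.inj (Sum.inr.inj h)
  obtain ⟨hu, hv⟩ := Prod.mk.inj (congrArg Subtype.val he)
  exact ⟨hu, hv, congrArg Subtype.val hx⟩

lemma exists_starPhi_of_adj {H : SimpleGraph V} {z z' : starVert V a b D E}
    (h : (starGraph H a b D E).Adj z z') :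
    ∃ (u v : D) (huv : E u v) (s t : V),
      H.Adj s t ∧ starPhi a b u v huv s = z ∧ starPhi a b u v huv t = z' := by
  obtain ⟨-, ⟨u, v, huv, s, t, hst, hs, ht⟩ | ⟨u, v, huv, s, t, hst, hs, ht⟩⟩ := h
  exacts [⟨u, v, huv, s, t, hst, hs, ht⟩, ⟨u, v, huv, t, s, hst.symm, ht, hs⟩]

lemma starMap_inl {W : Type*} (f : V → W) (d : D) :
    starMap f a b (Sum.inl d : starVert V a b D E) = f a :=
  rfl

lemma starMap_starPhi {W : Type*} {f : V → W} (hf : f a = f b) {u v : D} (huv : E u v) (x : V) :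
    starMap f a b (starPhi a b u v huv x) = f x := by
  by_cases hxa : x = a
  · rw [hxa, starPhi_left, starMap_inl]
  by_cases hxb : x = b
  · rw [hxb, starPhi_right (Ne.symm (hxb ▸ hxa)), starMap_inl, hf]
  · rw [starPhi_of_ne hxa hxb]
    rfl

end Star

section PathGraph

variable {V : Type*} {H : SimpleGraph V}

lemma pathGraph_adj_castSucc_succ {n : ℕ} (i : Fin n) :
    (pathGraph (n + 1)).Adj i.castSucc i.succ :=
  pathGraph_adj.mpr (Or.inl rfl)

def pathGraphHomOfAdj {n : ℕ} (y : Fin (n + 1) → V)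
    (hy : ∀ i : Fin n, H.Adj (y i.castSucc) (y i.succ)) : pathGraph (n + 1) →g H where
  toFun := y
  map_rel' {j k} hjk := by
    rcases pathGraph_adj.mp hjk with h | h
    · have := hy ⟨j, by omega⟩
      rwa [show (⟨j, _⟩ : Fin n).castSucc = j from Fin.ext rfl,
        show (⟨j, _⟩ : Fin n).succ = k from Fin.ext h] at this
    · have := hy ⟨k, by omega⟩
      rw [show (⟨k, _⟩ : Fin n).castSucc = k from Fin.ext rfl,
        show (⟨k, _⟩ : Fin n).succ = j from Fin.ext h] at this
      exact this.symm

@[simp]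
lemma coe_pathGraphHomOfAdj {n : ℕ} (y : Fin (n + 1) → V)
    (hy : ∀ i : Fin n, H.Adj (y i.castSucc) (y i.succ)) : ⇑(pathGraphHomOfAdj y hy) = y :=
  rfl

lemma pathGraph_hom_dist_le {m m' : ℕ} (x : pathGraph m →g pathGraph m') (i j : Fin m) :
    Nat.dist (x i) (x j) ≤ Nat.dist i j := by
  suffices h : ∀ d (i j : Fin m), (j : ℕ) = i + d → Nat.dist (x i) (x j) ≤ d by
    rcases le_total (i : ℕ) j with hij | hij
    · have := h (j - i) i j (by omega)
      unfold Nat.dist at *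
      omega
    · have := h (i - j) j i (by omega)
      rw [Nat.dist_comm]
      unfold Nat.dist at *
      omega
  intro d
  induction d with
  | zero =>
    intro i j hij
    rw [Fin.ext hij, Nat.dist_self]
  | succ d ih =>
    intro i j hij
    have hprev := ih i ⟨i + d, by omega⟩ rfl
    have hadj : (pathGraph m).Adj ⟨i + d, by omega⟩ j :=
      pathGraph_adj.mpr (Or.inl (by simp only; omega))
    have hstep := pathGraph_adj.mp (x.map_adj hadj)
    unfold Nat.dist at *
    omega

end PathGraph

section Lift

variable {V : Type*} {H : SimpleGraph V} {a b : V} {D : Type*} {E : D → D → Prop}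

lemma exists_eq_starPhi_comp_of_isRight {n : ℕ} (χ : pathGraph (n + 2) →g starGraph H a b D E)
    (hχ : ∀ k, k ≠ 0 → k ≠ Fin.last (n + 1) → (χ k).isRight) :
    ∃ (u v : D) (huv : E u v) (x : pathGraph (n + 2) →g H),
      ∀ k, χ k = starPhi a b u v huv (x k) := by
  choose u v huv s t hst hs ht using fun i : Fin (n + 1) =>
    exists_starPhi_of_adj (χ.map_adj (pathGraph_adj_castSucc_succ i))
  have hglue : ∀ i : Fin n, u i.castSucc = u i.succ ∧ v i.castSucc = v i.succ ∧
      t i.castSucc = s i.succ := by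
    intro i
    have hmid : starPhi a b _ _ (huv i.castSucc) (t i.castSucc) =
        starPhi a b _ _ (huv i.succ) (s i.succ) := by
      rw [ht, hs, Fin.succ_castSucc]
    refine starPhi_inj_of_isRight hmid ?_
    rw [ht]
    apply hχ
    · exact Fin.succ_ne_zero _
    · rw [Fin.succ_castSucc]
      exact (Fin.castSucc_lt_last _).ne
  have hconst : ∀ i, u i = u 0 ∧ v i = v 0 := by
    intro i
    induction i using Fin.induction with
    | zero => exact ⟨rfl, rfl⟩
    | succ i ih => rw [← (hglue i).1, ← (hglue i).2.1]; exact ih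
  refine ⟨u 0, v 0, huv 0, pathGraphHomOfAdj (Fin.cons (s 0) t) fun i => ?_, fun k => ?_⟩
  · cases i using Fin.cases with
    | zero =>
      rw [Fin.castSucc_zero, Fin.cons_zero, Fin.cons_succ]
      exact hst 0
    | succ i =>
      rw [← Fin.succ_castSucc, Fin.cons_succ, Fin.cons_succ, (hglue i).2.2]
      exact hst i.succ
  · cases k using Fin.cases with
    | zero => rw [coe_pathGraphHomOfAdj, Fin.cons_zero, hs 0, Fin.castSucc_zero]
    | succ i =>
      rw [← ht i, coe_pathGraphHomOfAdj, Fin.cons_succ]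
      exact starPhi_congr _ _ (hconst i).1 (hconst i).2 _

end Lift

def zigzag : Fin 13 → Fin 5 := ![0, 1, 2, 1, 2, 3, 4, 3, 2, 3, 2, 1, 0]

lemma zigzag_eq_zero_iff {y : Fin 13} : zigzag y = 0 ↔ y = 0 ∨ y = 12 := by
  revert y
  decide

lemma zigzag_eq_four_iff {y : Fin 13} : zigzag y = 4 ↔ y = 6 := by
  revert y
  decide

lemma apply_eq_self_of_zigzag_comp_eq (x : pathGraph 13 →g pathGraph 13)
    (hx : ∀ k, zigzag (x k) = zigzag k) (k : Fin 13) : x k = k := by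
  have h0 := zigzag_eq_zero_iff.mp (hx 0)
  have h6 := zigzag_eq_four_iff.mp (hx 6)
  have h12 := zigzag_eq_zero_iff.mp (hx 12)
  have h3 : x 3 ≠ 9 := fun h => absurd (h ▸ hx 3) (by decide)
  have h9 : x 9 ≠ 3 := fun h => absurd (h ▸ hx 9) (by decide)
  have := pathGraph_hom_dist_le x 0 3
  have := pathGraph_hom_dist_le x 3 6
  have := pathGraph_hom_dist_le x 6 9
  have := pathGraph_hom_dist_le x 9 12
  have := pathGraph_hom_dist_le x 0 k
  have := pathGraph_hom_dist_le x k 12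
  simp only [Nat.dist, Fin.ext_iff] at *
  omega

theorem stmt12_general (D : Type*) (E : D → D → Prop)
    (χ : pathGraph 13 →g starGraph (pathGraph 13) (0 : Fin 13) 12 D E)
    (hχ : ∀ x : Fin 13,
      starMap (![0, 1, 2, 1, 2, 3, 4, 3, 2, 3, 2, 1, 0] : Fin 13 → Fin 5) 0 12 (χ x) =
        ![0, 1, 2, 1, 2, 3, 4, 3, 2, 3, 2, 1, 0] x) :
    ∃ (u v : D) (huv : E u v), ∀ x : Fin 13, χ x = starPhi 0 12 u v huv x := by
  change ∀ k, starMap zigzag 0 12 (χ k) = zigzag k at hχ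
  have hright : ∀ k : Fin 13, k ≠ 0 → k ≠ Fin.last 12 → (χ k).isRight := by
    intro k hk0 hk12
    rcases hk : χ k with d | p
    · have hzero : zigzag k = 0 := by rw [← hχ k, hk, starMap_inl]; rfl
      exact absurd (zigzag_eq_zero_iff.mp hzero) (by tauto)
    · rfl
  obtain ⟨u, v, huv, x, hx⟩ := exists_eq_starPhi_comp_of_isRight χ hright
  have hxk : ∀ k, x k = k := apply_eq_self_of_zigzag_comp_eq x fun k => by
    rw [← hχ k, hx k, starMap_starPhi (show zigzag 0 = zigzag 12 from rfl)]
  exact ⟨u, v, huv, fun k => by rw [hx k, hxk k]⟩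

/-- Let `P₄ = pathGraph 5` be the path with vertices `{0,1,2,3,4}`, `P₁₂ = pathGraph 13`
the path with 13 vertices `a,…,m = 0,…,12` (consecutive vertices adjacent), and
`ψ : P₁₂ → P₄` the graph homomorphism with values, in order along `P₁₂`:
`0,1,2,1,2,3,4,3,2,3,2,1,0`. Then for every digraph `(D, E)` without isolated points,
every graph homomorphism `χ : P₁₂ → D ⋆ (P₁₂, a, m)` with `ψ_D ∘ χ = ψ` equals
`φ_{(u,v)}` for some edge `(u, v) ∈ E(D)`. -/
theorem stmt12 (D : Type*) (E : D → D → Prop)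
    (hD : ∀ d : D, ∃ d', E d d' ∨ E d' d)
    (χ : pathGraph 13 →g starGraph (pathGraph 13) (0 : Fin 13) 12 D E)
    (hχ : ∀ x : Fin 13,
      starMap (![0, 1, 2, 1, 2, 3, 4, 3, 2, 3, 2, 1, 0] : Fin 13 → Fin 5) 0 12 (χ x) =
        ![0, 1, 2, 1, 2, 3, 4, 3, 2, 3, 2, 1, 0] x) :
    ∃ (u v : D) (huv : E u v), ∀ x : Fin 13, χ x = starPhi 0 12 u v huv x :=
  stmt12_general D E χ hχ
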